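/- arXiv:2008.02857 — 2 statements merged into one kernel-verified Lean document; each statement's English description precedes it below -/
import Mathlib

section
/- If 𝒵 is a finite set of fuzzy ∅-bisimulations between fuzzy interpretations I and I', then the pointwise supremum sup 𝒵, defined by (sup 𝒵)(x,x') = sup { Z(x,x') : Z ∈ 𝒵 }, is also a fuzzy ∅-bisimulation between I and I'. -/
open unitInterval
open scoped Classical

instance : Fact ((0:ℝ) ≤ 1) := ⟨zero_le_one⟩

/-- The Gödel implication on the unit interval. -/
noncomputable def gimp (p q : I) : I := if p ≤ q then 1 else q

/-- The Gödel biimplication on the unit interval. -/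
noncomputable def giff (p q : I) : I := min (gimp p q) (gimp q p)

/-- `Z` is a fuzzy ∅-bisimulation between the fuzzy interpretation with domain `Δ`,
concept-name interpretation `A` and role-name interpretation `r`, and the fuzzy
interpretation with domain `Δ'`, interpretations `A'` and `r'`. -/
def IsFuzzyBisim {CN RN Δ Δ' : Type*}
    (A : CN → Δ → I) (r : RN → Δ → Δ → I)
    (A' : CN → Δ' → I) (r' : RN → Δ' → Δ' → I)
    (Z : Δ → Δ' → I) : Prop :=
  (∀ x x' (a : CN), Z x x' ≤ giff (A a x) (A' a x')) ∧
  (∀ x x' (ρ : RN) (y : Δ), ∃ y' : Δ',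
      min (Z x x') (r ρ x y) ≤ min (Z y y') (r' ρ x' y')) ∧
  (∀ x x' (ρ : RN) (y' : Δ'), ∃ y : Δ,
      min (Z x x') (r' ρ x' y') ≤ min (Z y y') (r ρ x y))

/-! The supremum of a finite family is attained at every pair `(x, x')` by one of its members,
or by `⊥` when the family is empty; both are bisimulations lying below the supremum, and that
is all the three bisimulation conditions need. -/

namespace IsFuzzyBisim

variable {CN RN Δ Δ' : Type*} {A : CN → Δ → I} {r : RN → Δ → Δ → I}
  {A' : CN → Δ' → I} {r' : RN → Δ' → Δ' → I}

theorem bot : IsFuzzyBisim A r A' r' ⊥ :=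
  ⟨fun _ _ _ => bot_le,
   fun _ x' _ _ => ⟨x', by simp⟩,
   fun x _ _ _ => ⟨x, by simp⟩⟩

theorem of_forall_exists_le {W : Δ → Δ' → I}
    (hW : ∀ x x', ∃ Z, IsFuzzyBisim A r A' r' Z ∧ Z ≤ W ∧ W x x' ≤ Z x x') :
    IsFuzzyBisim A r A' r' W := by
  refine ⟨fun x x' a => ?_, fun x x' ρ y => ?_, fun x x' ρ y' => ?_⟩
  · obtain ⟨Z, hZ, -, hWZ⟩ := hW x x'
    exact hWZ.trans (hZ.1 x x' a)
  · obtain ⟨Z, hZ, hZW, hWZ⟩ := hW x x'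
    obtain ⟨y', hy'⟩ := hZ.2.1 x x' ρ y
    exact ⟨y', (min_le_min_right _ hWZ).trans (hy'.trans (min_le_min_right _ (hZW y y')))⟩
  · obtain ⟨Z, hZ, hZW, hWZ⟩ := hW x x'
    obtain ⟨y, hy⟩ := hZ.2.2 x x' ρ y'
    exact ⟨y, (min_le_min_right _ hWZ).trans (hy.trans (min_le_min_right _ (hZW y y')))⟩

end IsFuzzyBisim

theorem sup_finite_isFuzzyBisim_general {CN RN Δ Δ' : Type*}
    (A : CN → Δ → I) (r : RN → Δ → Δ → I)
    (A' : CN → Δ' → I) (r' : RN → Δ' → Δ' → I)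
    (𝒵 : Set (Δ → Δ' → I)) (hfin : 𝒵.Finite)
    (h : ∀ Z ∈ 𝒵, IsFuzzyBisim A r A' r' Z) :
    IsFuzzyBisim A r A' r' (fun x x' => ⨆ Z ∈ 𝒵, Z x x') := by
  refine IsFuzzyBisim.of_forall_exists_le fun x x' => ?_
  obtain ⟨Z₀, hZ₀, hmax⟩ := Set.exists_max_image (insert ⊥ 𝒵) (fun Z => Z x x')
    (hfin.insert ⊥) (Set.insert_nonempty _ _)
  refine ⟨Z₀, ?_, ?_, iSup₂_le fun Z hZ => hmax Z (Set.mem_insert_of_mem _ hZ)⟩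
  · rcases hZ₀ with rfl | hZ₀
    exacts [IsFuzzyBisim.bot, h Z₀ hZ₀]
  · rcases hZ₀ with rfl | hZ₀
    exacts [bot_le, fun y y' => le_iSup₂_of_le Z₀ hZ₀ le_rfl]

theorem sup_finite_isFuzzyBisim {CN RN Δ Δ' : Type*} [Nonempty Δ] [Nonempty Δ']
    (A : CN → Δ → I) (r : RN → Δ → Δ → I)
    (A' : CN → Δ' → I) (r' : RN → Δ' → Δ' → I)
    (𝒵 : Set (Δ → Δ' → I)) (hfin : 𝒵.Finite)
    (h : ∀ Z ∈ 𝒵, IsFuzzyBisim A r A' r' Z) :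
    IsFuzzyBisim A r A' r' (fun x x' => ⨆ Z ∈ 𝒵, Z x x') :=
  sup_finite_isFuzzyBisim_general A r A' r' 𝒵 hfin h
end

section
/- If 𝒵 is an arbitrary (possibly infinite) set of crisp ∅-bisimulations between fuzzy interpretations I and I' (fuzzy ∅-bisimulations whose range is contained in {0,1}), then sup 𝒵 is also a crisp ∅-bisimulation between I and I'. -/
open unitInterval
open scoped Classical

/-! At each pair the supremum of a crisp family is either `0`, where the zero relation (itself a
bisimulation) dominates it, or `1`, attained by a member of the family; and a relation that is
pointwise dominated by bisimulations lying below it inherits the bisimulation conditions. -/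

section

variable {CN RN Δ Δ' : Type*} {A : CN → Δ → I} {r : RN → Δ → Δ → I}
  {A' : CN → Δ' → I} {r' : RN → Δ' → Δ' → I}

theorem isFuzzyBisim_zero : IsFuzzyBisim A r A' r' 0 :=
  ⟨fun _ _ _ => nonneg', fun _ x' _ _ => ⟨x', (min_le_left _ _).trans (le_min le_rfl nonneg')⟩,
    fun x _ _ _ => ⟨x, (min_le_left _ _).trans (le_min le_rfl nonneg')⟩⟩

theorem IsFuzzyBisim.of_forall_exists_le_s17 {S : Δ → Δ' → I}
    (hS : ∀ x x', ∃ Z, IsFuzzyBisim A r A' r' Z ∧ Z ≤ S ∧ S x x' ≤ Z x x') :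
    IsFuzzyBisim A r A' r' S := by
  refine ⟨fun x x' a => ?_, fun x x' ρ y => ?_, fun x x' ρ y' => ?_⟩
  · obtain ⟨Z, hZ, -, hSZ⟩ := hS x x'
    exact hSZ.trans (hZ.1 x x' a)
  · obtain ⟨Z, hZ, hZS, hSZ⟩ := hS x x'
    obtain ⟨y', hy'⟩ := hZ.2.1 x x' ρ y
    exact ⟨y', (min_le_min_right _ hSZ).trans (hy'.trans (min_le_min_right _ (hZS y y')))⟩
  · obtain ⟨Z, hZ, hZS, hSZ⟩ := hS x x'
    obtain ⟨y, hy⟩ := hZ.2.2 x x' ρ y'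
    exact ⟨y, (min_le_min_right _ hSZ).trans (hy.trans (min_le_min_right _ (hZS y y')))⟩

end

theorem biSup_eq_bot_or_exists_eq_top {ι α : Type*} [CompleteLattice α] {s : Set ι} {f : ι → α}
    (hf : ∀ i ∈ s, f i = ⊥ ∨ f i = ⊤) : (⨆ i ∈ s, f i) = ⊥ ∨ ∃ i ∈ s, f i = ⊤ :=
  or_iff_not_imp_right.mpr fun htop =>
    iSup₂_eq_bot.mpr fun i hi => (hf i hi).resolve_right fun hi_top => htop ⟨i, hi, hi_top⟩

theorem sup_crisp_isFuzzyBisim_general {CN RN Δ Δ' : Type*}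
    (A : CN → Δ → I) (r : RN → Δ → Δ → I)
    (A' : CN → Δ' → I) (r' : RN → Δ' → Δ' → I)
    (𝒵 : Set (Δ → Δ' → I))
    (hcrisp : ∀ Z ∈ 𝒵, ∀ x x', Z x x' = 0 ∨ Z x x' = 1)
    (h : ∀ Z ∈ 𝒵, IsFuzzyBisim A r A' r' Z) :
    (∀ x x', (⨆ Z ∈ 𝒵, Z x x') = 0 ∨ (⨆ Z ∈ 𝒵, Z x x') = 1) ∧
    IsFuzzyBisim A r A' r' (fun x x' => ⨆ Z ∈ 𝒵, Z x x') := by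
  have hle : ∀ Z ∈ 𝒵, Z ≤ fun x x' => ⨆ Z ∈ 𝒵, Z x x' :=
    fun Z hZ x x' => le_iSup₂ (f := fun W _ => W x x') Z hZ
  have hdich : ∀ x x', (⨆ Z ∈ 𝒵, Z x x') = 0 ∨ ∃ Z ∈ 𝒵, Z x x' = 1 :=
    fun x x' => biSup_eq_bot_or_exists_eq_top fun Z hZ => hcrisp Z hZ x x'
  refine ⟨fun x x' => (hdich x x').imp_right fun ⟨Z, hZ, h1⟩ =>
      le_antisymm le_one' (h1.symm.le.trans (hle Z hZ x x')),
    IsFuzzyBisim.of_forall_exists_le_s17 fun x x' => ?_⟩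
  rcases hdich x x' with h0 | ⟨Z, hZ, h1⟩
  · exact ⟨0, isFuzzyBisim_zero, fun _ _ => nonneg', h0.le⟩
  · exact ⟨Z, h Z hZ, hle Z hZ, h1 ▸ le_one'⟩

theorem sup_crisp_isFuzzyBisim {CN RN Δ Δ' : Type*} [Nonempty Δ] [Nonempty Δ']
    (A : CN → Δ → I) (r : RN → Δ → Δ → I)
    (A' : CN → Δ' → I) (r' : RN → Δ' → Δ' → I)
    (𝒵 : Set (Δ → Δ' → I))
    (hcrisp : ∀ Z ∈ 𝒵, ∀ x x', Z x x' = 0 ∨ Z x x' = 1)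
    (h : ∀ Z ∈ 𝒵, IsFuzzyBisim A r A' r' Z) :
    (∀ x x', (⨆ Z ∈ 𝒵, Z x x') = 0 ∨ (⨆ Z ∈ 𝒵, Z x x') = 1) ∧
    IsFuzzyBisim A r A' r' (fun x x' => ⨆ Z ∈ 𝒵, Z x x') :=
  sup_crisp_isFuzzyBisim_general A r A' r' 𝒵 hcrisp h
end
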